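/- The set of non-invertible elements of the subsemigroup of T_n generated by a singular transformation a together with all permutations is exactly the set of all transformations of rank at most rank(a) that can be written as products of S_n-conjugates of a; in particular this set is closed under conjugation by S_n. -/

import Mathlib

/-- The full transformation monoid on `{1,...,n}`, modeled as `Function.End (Fin n)`
(multiplication is composition). -/
abbrev Tn (n : ℕ) := Function.End (Fin n)

/-- A permutation viewed as a transformation. -/
def ofPerm {n : ℕ} (g : Equiv.Perm (Fin n)) : Tn n := ⇑g

/-- The rank of a transformation: the size of its image. -/
def rnk {n : ℕ} (a : Tn n) : ℕ := (Finset.univ.image a).card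

/-- The symmetric group embedded in `Tn n` as a set. -/
def perms (n : ℕ) : Set (Tn n) := Set.range (fun g : Equiv.Perm (Fin n) => ofPerm g)

/-- The `S_n`-conjugacy class of a transformation. -/
def conjClass {n : ℕ} (t : Tn n) : Set (Tn n) :=
  {s | ∃ g : Equiv.Perm (Fin n), s = ofPerm g⁻¹ * t * ofPerm g}

/-!
Write `I` for the image of `a` and `⟨C_a⟩` for the subsemigroup generated by the conjugates of
`a`; it is closed under conjugation by `S_n`. Moving permutations to the right by conjugation, every
element of `⟨{a} ∪ S_n⟩` outside `S_n` has the form `c * g` with `c ∈ ⟨C_a⟩` and `g ∈ S_n`, so it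
suffices to show `a * g ∈ ⟨C_a⟩`, and, factoring `g` into transpositions, that
`b * (x y) ∈ ⟨C_a⟩` for `b ∈ ⟨C_a⟩` with image in `I`. If `y ∉ I`, then
`b * (x y) = e * ((x y) * b * (x y))` for any `e ∈ ⟨C_a⟩` with `e ∘ (x y) = id` on `I`; a
transposition of two points of `I` is a product of three transpositions moving a point outside `I`.

Such an `e` is a conjugate of some `e₀ ∈ ⟨C_a⟩` that fixes `I` pointwise and has image `I`. Take a
transversal `T` of the kernel of `a` and a permutation `σ` exchanging `I \ T` with `T \ I`; then
`u = a * σ⁻¹ a σ` permutes `I`, and a suitable power of `u` is `e₀`.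
-/

open Equiv Function Set Finset

theorem Finset.exists_perm_exchange {α : Type*} [DecidableEq α] {D E : Finset α}
    (hDE : Disjoint D E) (hcard : #D = #E) :
    ∃ σ : Perm α, (∀ x ∈ D, σ x ∈ E) ∧ (∀ x ∈ E, σ x ∈ D) ∧ ∀ x, x ∉ D → x ∉ E → σ x = x := by
  induction D using Finset.induction_on generalizing E with
  | empty =>
    obtain rfl : E = ∅ := card_eq_zero.1 (by simpa using hcard.symm)
    exact ⟨1, by simp, by simp, fun _ _ _ => rfl⟩
  | insert x D hx ih =>
    obtain ⟨y, hy⟩ : E.Nonempty := by rw [← card_pos, ← hcard]; simp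
    have hxE : x ∉ E := disjoint_left.1 hDE (mem_insert_self x D)
    have hyD : y ∉ D := fun h => disjoint_left.1 hDE (mem_insert_of_mem h) hy
    obtain ⟨σ, hD, hE, hfix⟩ := ih (E := E.erase y)
      (disjoint_of_subset_right (erase_subset y E)
        (disjoint_of_subset_left (subset_insert x D) hDE))
      (by rw [card_erase_of_mem hy, ← hcard, card_insert_of_notMem hx]; simp)
    have hσx : σ x = x := hfix x hx (fun h => hxE (mem_of_mem_erase h))
    have hσy : σ y = y := hfix y hyD (notMem_erase y E)
    have hDE' : ∀ z ∈ D, z ∉ E := fun z hz => disjoint_left.1 hDE (mem_insert_of_mem hz)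
    refine ⟨swap x y * σ, fun z hz => ?_, fun z hz => ?_, fun z hzD hzE => ?_⟩ <;>
      grind [Perm.mul_apply]

theorem Finset.exists_perm_mapsTo_and_inv_mapsTo {α : Type*} [DecidableEq α] {s t : Finset α}
    (h : #s = #t) : ∃ σ : Perm α, MapsTo σ s t ∧ MapsTo ⇑σ⁻¹ s t := by
  obtain ⟨σ, hst, hts, hfix⟩ := exists_perm_exchange disjoint_sdiff_sdiff (card_sdiff_comm h)
  refine ⟨σ, fun x hx => ?_, fun x hx => ?_⟩
  · grind
  · have : σ (σ⁻¹ x) = x := by simp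
    grind

theorem Set.InjOn.exists_iterate_eqOn_id {α : Type*} [Finite α] {f : α → α} {s : Set α}
    (hinj : InjOn f s) (hmaps : MapsTo f s s) : ∃ k, 0 < k ∧ EqOn f^[k] id s := by
  have hbij : BijOn f s s := (s.toFinite.injOn_iff_bijOn_of_mapsTo hmaps).1 hinj
  obtain ⟨k, hk, hpow⟩ := isOfFinOrder_iff_pow_eq_one.1 (isOfFinOrder_of_finite (hbij.equiv f))
  refine ⟨k, hk, fun x hx => ?_⟩
  have := congrArg Subtype.val (Perm.ext_iff.1 hpow ⟨x, hx⟩)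
  rwa [Perm.coe_pow, Perm.one_apply, BijOn.equiv, coe_ofBijective, hmaps.coe_iterate_restrict]
    at this

theorem Subsemigroup.pow_succ_mem {M : Type*} [Monoid M] {S : Subsemigroup M} {x : M}
    (hx : x ∈ S) (k : ℕ) : x ^ (k + 1) ∈ S := by
  induction k with
  | zero => simpa using hx
  | succ k ih => rw [pow_succ]; exact mul_mem ih hx

namespace Tn

variable {n : ℕ}

@[simp] theorem mul_apply (f g : Tn n) (x : Fin n) : (f * g) x = f (g x) := rfl

@[simp] theorem ofPerm_apply (g : Perm (Fin n)) (x : Fin n) : ofPerm g x = g x := rfl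

theorem rnk_mul_le_left (f g : Tn n) : rnk (f * g) ≤ rnk f :=
  card_le_card fun y hy => by
    obtain ⟨x, -, rfl⟩ := mem_image.1 hy
    exact mem_image_of_mem f (mem_univ (g x))

-- `key` is stated for plain functions: `rw` does not see through `Function.End`.
theorem rnk_ofPerm_mul (g : Perm (Fin n)) (f : Tn n) : rnk (ofPerm g * f) = rnk f := by
  have key (f : Fin n → Fin n) : #(univ.image (g ∘ f)) = #(univ.image f) := by
    rw [← Finset.image_image, card_image_of_injective _ g.injective]
  exact key f

theorem rnk_eq_iff_bijective (a : Tn n) : rnk a = n ↔ Bijective a := by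
  have key (f : Fin n → Fin n) : #(univ.image f) = n ↔ Bijective f := by
    rw [← Finite.injective_iff_bijective, ← injOn_univ, ← coe_univ, ← card_image_iff, card_univ,
      Fintype.card_fin]
  exact key a

theorem conj_mem_closure_conjClass {a b : Tn n} (hb : b ∈ Subsemigroup.closure (conjClass a))
    (g : Perm (Fin n)) : ofPerm g⁻¹ * b * ofPerm g ∈ Subsemigroup.closure (conjClass a) := by
  induction hb using Subsemigroup.closure_induction with
  | mem c hc =>
    obtain ⟨p, rfl⟩ := hc
    refine Subsemigroup.subset_closure ⟨p * g, funext fun x => ?_⟩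
    simp [mul_inv_rev]
  | mul x y _ _ hx hy =>
    convert mul_mem hx hy using 1
    funext w
    simp

theorem mem_closure_conjClass_self (a : Tn n) : a ∈ Subsemigroup.closure (conjClass a) :=
  Subsemigroup.subset_closure ⟨1, rfl⟩

theorem rnk_le_of_mem_closure_conjClass {a b : Tn n}
    (hb : b ∈ Subsemigroup.closure (conjClass a)) : rnk b ≤ rnk a := by
  induction hb using Subsemigroup.closure_induction with
  | mem c hc =>
    obtain ⟨g, rfl⟩ := hc
    exact (rnk_mul_le_left _ _).trans (rnk_ofPerm_mul _ _).le
  | mul x y _ _ hx _ => exact (rnk_mul_le_left x y).trans hx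


theorem notMem_perms_of_mem_closure_conjClass {a b : Tn n} (ha : ¬ Bijective a)
    (hb : b ∈ Subsemigroup.closure (conjClass a)) : b ∉ perms n := by
  rintro ⟨g, rfl⟩
  have hg : rnk (ofPerm g) = n := (rnk_eq_iff_bijective _).2 g.bijective
  have hle : rnk a ≤ n := (card_le_univ _).trans_eq (Fintype.card_fin n)
  exact ha ((rnk_eq_iff_bijective a).1
    (hle.antisymm (hg.symm.trans_le (rnk_le_of_mem_closure_conjClass hb))))

theorem exists_mem_closure_conjClass_eqOn_range (a : Tn n) :
    ∃ e ∈ Subsemigroup.closure (conjClass a), EqOn e id (range a) ∧ ∀ w, e w ∈ range a := by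
  obtain ⟨T, -, hTinj, hTa⟩ :=
    exists_subset_injOn_image_eq_of_surjOn (f := a) Set.univ (Finset.univ.image a) fun y hy => by
      obtain ⟨x, -, rfl⟩ := mem_image.1 hy
      exact ⟨x, trivial, rfl⟩
  have hcard : #(univ.image a) = #T := by rw [← hTa, card_image_of_injOn hTinj]
  obtain ⟨σ, hσ, hσinv⟩ := exists_perm_mapsTo_and_inv_mapsTo hcard
  have hI : ∀ z ∈ range a, z ∈ Finset.univ.image a := fun _ => mem_image_univ_iff_mem_range.2
  set u : Tn n := a * (ofPerm σ⁻¹ * a * ofPerm σ)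
  have hu : u ∈ Subsemigroup.closure (conjClass a) :=
    mul_mem (mem_closure_conjClass_self a) (Subsemigroup.subset_closure ⟨σ, rfl⟩)
  have hinj : InjOn u (range a) := fun z₁ hz₁ z₂ hz₂ h => by
    have h₁ := hσ (hI z₁ hz₁)
    have h₂ := hσ (hI z₂ hz₂)
    have h' := hTinj (hσinv (hI _ (mem_range_self _))) (hσinv (hI _ (mem_range_self _))) h
    exact σ.injective (hTinj h₁ h₂ (σ⁻¹.injective h'))
  obtain ⟨k, hk, hid⟩ := hinj.exists_iterate_eqOn_id fun z _ => mem_range_self _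
  obtain ⟨j, rfl⟩ := Nat.exists_eq_add_one_of_ne_zero hk.ne'
  exact ⟨u ^ (j + 1), Subsemigroup.pow_succ_mem hu j, hid,
    fun w => ⟨_, (iterate_succ_apply' u j w).symm⟩⟩

theorem exists_mem_closure_conjClass_apply_swap_eq (a : Tn n) {y : Fin n} (hy : y ∉ range a)
    (x : Fin n) : ∃ e ∈ Subsemigroup.closure (conjClass a), ∀ z ∈ range a, e (swap x y z) = z := by
  obtain ⟨e, he, hid, hrange⟩ := exists_mem_closure_conjClass_eqOn_range a
  by_cases hx : x ∈ range a
  -- conjugating by `swap x (e y)` makes `e` send `y` to `x` while still fixing `range a`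
  · refine ⟨ofPerm (swap x (e y))⁻¹ * e * ofPerm (swap x (e y)),
      conj_mem_closure_conjClass he _, fun z hz => ?_⟩
    have := hrange y
    have := @hid (swap x (e y) z)
    simp only [mul_apply, ofPerm_apply, swap_inv]
    grind
  · refine ⟨e, he, fun z hz => ?_⟩
    rw [swap_apply_of_ne_of_ne (ne_of_mem_of_not_mem hz hx) (ne_of_mem_of_not_mem hz hy)]
    exact hid hz

theorem mul_swap_mem_closure_conjClass_of_notMem_range {a b : Tn n}
    (hb : b ∈ Subsemigroup.closure (conjClass a)) (hba : range b ⊆ range a) {y : Fin n}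
    (hy : y ∉ range a) (x : Fin n) :
    b * ofPerm (swap x y) ∈ Subsemigroup.closure (conjClass a) := by
  obtain ⟨e, he, hey⟩ := exists_mem_closure_conjClass_apply_swap_eq a hy x
  have h : b * ofPerm (swap x y) = e * (ofPerm (swap x y)⁻¹ * b * ofPerm (swap x y)) :=
    funext fun w => by simp [hey _ (hba (mem_range_self _))]
  rw [h]
  exact mul_mem he (conj_mem_closure_conjClass hb _)

theorem range_mul_subset (f g : Tn n) : range (f * g) ⊆ range f := range_comp_subset_range g f

theorem mul_swap_mem_closure_conjClass {a b : Tn n} (ha : ¬ Surjective a)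
    (hb : b ∈ Subsemigroup.closure (conjClass a)) (hba : range b ⊆ range a) (x y : Fin n) :
    b * ofPerm (swap x y) ∈ Subsemigroup.closure (conjClass a) := by
  obtain ⟨k, hk⟩ : ∃ k, k ∉ range a := not_forall.1 ha
  by_cases hy : y ∈ range a
  swap
  · exact mul_swap_mem_closure_conjClass_of_notMem_range hb hba hy x
  by_cases hx : x ∈ range a
  swap
  · rw [swap_comm]; exact mul_swap_mem_closure_conjClass_of_notMem_range hb hba hx y
  obtain rfl | hxy := eq_or_ne x y
  · rw [swap_self]; exact hb
  have hswap : swap x y = swap k x * swap y k * swap k x :=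
    (swap_mul_swap_mul_swap (ne_of_mem_of_not_mem hy hk) hxy.symm).symm
  have step {c : Tn n} (hc : c ∈ Subsemigroup.closure (conjClass a)) (hca : range c ⊆ range a)
      (z : Fin n) : c * ofPerm (swap z k) ∈ Subsemigroup.closure (conjClass a) ∧
        range (c * ofPerm (swap z k)) ⊆ range a :=
    ⟨mul_swap_mem_closure_conjClass_of_notMem_range hc hca hk z,
      (range_mul_subset _ _).trans hca⟩
  obtain ⟨h₁, h₁a⟩ := step hb hba x
  obtain ⟨h₂, h₂a⟩ := step h₁ h₁a y
  rw [hswap, swap_comm k x]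
  exact (step h₂ h₂a x).1

theorem mul_ofPerm_mem_closure_conjClass_self {a : Tn n} (ha : ¬ Surjective a)
    (g : Perm (Fin n)) : a * ofPerm g ∈ Subsemigroup.closure (conjClass a) := by
  induction g using Perm.swap_induction_on' with
  | one => exact mem_closure_conjClass_self a
  | mul_swap f x y _ hf =>
    exact mul_swap_mem_closure_conjClass ha hf (range_mul_subset _ _) x y

theorem mul_ofPerm_mem_closure_conjClass {a b : Tn n} (ha : ¬ Surjective a)
    (hb : b ∈ Subsemigroup.closure (conjClass a)) (g : Perm (Fin n)) :
    b * ofPerm g ∈ Subsemigroup.closure (conjClass a) := by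
  induction hb using Subsemigroup.closure_induction with
  | mem c hc =>
    obtain ⟨p, rfl⟩ := hc
    have h : ofPerm p⁻¹ * a * ofPerm p * ofPerm g =
        ofPerm p⁻¹ * (a * ofPerm (p * g * p⁻¹)) * ofPerm p := funext fun w => by simp
    rw [h]
    exact conj_mem_closure_conjClass (mul_ofPerm_mem_closure_conjClass_self ha _) p
  | mul x y hx _ _ hy =>
    rw [mul_assoc]
    exact mul_mem hx hy

theorem ofPerm_mul_mem_closure_conjClass {a b : Tn n} (ha : ¬ Surjective a)
    (hb : b ∈ Subsemigroup.closure (conjClass a)) (g : Perm (Fin n)) :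
    ofPerm g * b ∈ Subsemigroup.closure (conjClass a) := by
  have h : ofPerm g * b = ofPerm g⁻¹⁻¹ * b * ofPerm g⁻¹ * ofPerm g := funext fun w => by simp
  rw [h]
  exact mul_ofPerm_mem_closure_conjClass ha (conj_mem_closure_conjClass hb _) g

theorem closure_conjClass_le (a : Tn n) :
    Subsemigroup.closure (conjClass a) ≤ Subsemigroup.closure ({a} ∪ perms n) := by
  rw [Subsemigroup.closure_le]
  rintro _ ⟨g, rfl⟩
  have mem_perms (p : Perm (Fin n)) : ofPerm p ∈ Subsemigroup.closure ({a} ∪ perms n) :=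
    Subsemigroup.subset_closure (Or.inr ⟨p, rfl⟩)
  exact mul_mem (mul_mem (mem_perms _) (Subsemigroup.subset_closure (Or.inl rfl))) (mem_perms _)

theorem mem_perms_or_mem_closure_conjClass {a w : Tn n} (ha : ¬ Surjective a)
    (hw : w ∈ Subsemigroup.closure ({a} ∪ perms n)) :
    w ∈ perms n ∨ w ∈ Subsemigroup.closure (conjClass a) := by
  induction hw using Subsemigroup.closure_induction with
  | mem x hx =>
    obtain rfl | hx := hx
    · exact Or.inr (mem_closure_conjClass_self x)
    · exact Or.inl hx
  | mul x y _ _ hx hy =>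
    obtain ⟨p, rfl⟩ | hx := hx
    · obtain ⟨q, rfl⟩ | hy := hy
      · exact Or.inl ⟨p * q, rfl⟩
      · exact Or.inr (ofPerm_mul_mem_closure_conjClass ha hy p)
    · obtain ⟨q, rfl⟩ | hy := hy
      · exact Or.inr (mul_ofPerm_mem_closure_conjClass ha hx q)
      · exact Or.inr (mul_mem hx hy)

end Tn

open Tn

/-- The non-invertible part of `⟨{a} ∪ S_n⟩` is exactly the set of transformations of rank at
most `rank a` that are products of `S_n`-conjugates of `a`; in particular it is closed under
conjugation by `S_n`. -/
theorem stmt19 (n : ℕ) (a : Tn n) (ha : ¬ Function.Bijective a) :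
    (↑(Subsemigroup.closure ({a} ∪ perms n)) : Set (Tn n)) \ perms n =
      {t : Tn n | rnk t ≤ rnk a ∧ t ∈ Subsemigroup.closure (conjClass a)} ∧
    ∀ t ∈ (↑(Subsemigroup.closure ({a} ∪ perms n)) : Set (Tn n)) \ perms n,
      ∀ g : Equiv.Perm (Fin n),
        ofPerm g⁻¹ * t * ofPerm g ∈
          (↑(Subsemigroup.closure ({a} ∪ perms n)) : Set (Tn n)) \ perms n := by
  have hsurj : ¬ Surjective a := fun h => ha (Finite.surjective_iff_bijective.1 h)
  have hset : (↑(Subsemigroup.closure ({a} ∪ perms n)) : Set (Tn n)) \ perms n =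
      {t : Tn n | rnk t ≤ rnk a ∧ t ∈ Subsemigroup.closure (conjClass a)} := by
    ext t
    constructor
    · rintro ⟨ht, htp⟩
      have hcl := (mem_perms_or_mem_closure_conjClass hsurj ht).resolve_left htp
      exact ⟨rnk_le_of_mem_closure_conjClass hcl, hcl⟩
    · rintro ⟨-, hcl⟩
      exact ⟨closure_conjClass_le a hcl, notMem_perms_of_mem_closure_conjClass ha hcl⟩
  refine ⟨hset, fun t ht g => ?_⟩
  rw [hset] at ht ⊢
  have hcl := conj_mem_closure_conjClass ht.2 g
  exact ⟨rnk_le_of_mem_closure_conjClass hcl, hcl⟩
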